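/- arXiv:2512.07257 — 2 statements merged into one kernel-verified Lean document; each statement's English description precedes it below -/
import Mathlib

section
/- Let n ≥ 1 be a natural number and let A be a symmetric n × n real matrix with trace zero. Then for every vector ξ ∈ ℝⁿ one has ‖A ξ‖² ≤ ((n − 1)/n) · ‖A‖_F² · ‖ξ‖², where ‖A ξ‖ and ‖ξ‖ denote the Euclidean norm on ℝⁿ, A ξ is matrix–vector multiplication, and ‖A‖_F² = ∑_{i,j} A_{ij}² is the squared Frobenius norm of A. (Equivalently, for a trace-free symmetric bilinear form A on an n-dimensional real inner product space, A²(ξ,ξ) ≤ ((n−1)/n)|A|²|ξ|² for every ξ.) -/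
open Matrix Finset

/-- If the eigenvalues sum to zero, each squared eigenvalue is at most
`(n-1)/n` times the sum of squares. -/
lemma aux_sq_le {n : ℕ} (lam : Fin n → ℝ) (hsum : ∑ j, lam j = 0) (i : Fin n) :
    (n : ℝ) * lam i ^ 2 ≤ ((n : ℝ) - 1) * ∑ j, lam j ^ 2 := by
  have hmem : i ∈ (univ : Finset (Fin n)) := mem_univ i
  have h1 : lam i + ∑ j ∈ univ.erase i, lam j = 0 := by
    rw [Finset.add_sum_erase _ _ hmem]; exact hsum
  have h2 : lam i ^ 2 = (∑ j ∈ univ.erase i, lam j) ^ 2 := by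
    have : lam i = -∑ j ∈ univ.erase i, lam j := by linarith
    rw [this]; ring
  have hcard : ((univ.erase i).card : ℝ) = (n : ℝ) - 1 := by
    rw [Finset.card_erase_of_mem hmem, Finset.card_univ, Fintype.card_fin]
    have hn : 1 ≤ n := Fin.pos i
    push_cast [Nat.cast_sub hn]; ring
  have hcs : (∑ j ∈ univ.erase i, lam j) ^ 2 ≤
      ((univ.erase i).card : ℝ) * ∑ j ∈ univ.erase i, lam j ^ 2 := by
    exact sq_sum_le_card_mul_sum_sq
  have herase : ∑ j ∈ univ.erase i, lam j ^ 2 = (∑ j, lam j ^ 2) - lam i ^ 2 := by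
    rw [Finset.sum_erase_eq_sub hmem]
  rw [hcard, herase] at hcs
  rw [h2] at *
  nlinarith [hcs]

/-- An orthogonal matrix preserves sums of squares. -/
lemma aux_orth_sum_sq {n : ℕ} (U : Matrix (Fin n) (Fin n) ℝ)
    (hU : Uᵀ * U = 1) (w : Fin n → ℝ) :
    ∑ i, (U *ᵥ w) i ^ 2 = ∑ i, w i ^ 2 := by
  have h1 : ∀ v : Fin n → ℝ, ∑ i, v i ^ 2 = v ⬝ᵥ v := by
    intro v; simp [dotProduct, sq]
  rw [h1, h1, dotProduct_mulVec, ← mulVec_transpose, mulVec_mulVec, hU, one_mulVec]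

/-- For a trace-free symmetric `n × n` real matrix `A` and any vector `ξ ∈ ℝⁿ`,
`‖A ξ‖² ≤ ((n − 1)/n) · ‖A‖_F² · ‖ξ‖²`, with Euclidean norms and the squared
Frobenius norm `‖A‖_F² = ∑ᵢⱼ Aᵢⱼ²`. -/
theorem tracefree_symmetric_quadratic_bound
    (n : ℕ) (hn : 1 ≤ n) (A : Matrix (Fin n) (Fin n) ℝ)
    (hA : A.IsSymm) (htr : A.trace = 0) (ξ : Fin n → ℝ) :
    ∑ i, (A.mulVec ξ i) ^ 2 ≤
      ((n - 1 : ℝ) / n) * (∑ i, ∑ j, (A i j) ^ 2) * (∑ i, (ξ i) ^ 2) := by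
  have hH : A.IsHermitian := by
    rw [Matrix.IsHermitian, conjTranspose_eq_transpose_of_trivial]; exact hA
  set U : Matrix (Fin n) (Fin n) ℝ := (hH.eigenvectorUnitary : Matrix (Fin n) (Fin n) ℝ) with hUdef
  set lam : Fin n → ℝ := hH.eigenvalues with hlamdef
  have hUmem := hH.eigenvectorUnitary.2
  have hU1 : star U * U = 1 := hUmem.1
  have hU2 : U * star U = 1 := hUmem.2
  have hstar : star U = Uᵀ := by
    rw [Matrix.star_eq_conjTranspose, conjTranspose_eq_transpose_of_trivial]
  have hspec : A = U * Matrix.diagonal lam * star U := by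
    simpa [Function.comp] using hH.spectral_theorem
  -- coordinates of ξ in the eigenbasis
  set c : Fin n → ℝ := star U *ᵥ ξ with hcdef
  have hξ : ξ = U *ᵥ c := by
    rw [hcdef, mulVec_mulVec, hU2, one_mulVec]
  have hAξ : A *ᵥ ξ = U *ᵥ (fun i => lam i * c i) := by
    have hd : Matrix.diagonal lam *ᵥ c = fun i => lam i * c i := by
      ext i; exact mulVec_diagonal lam c i
    rw [hspec, ← mulVec_mulVec, ← mulVec_mulVec, ← hcdef, hd]
  have hUorth : Uᵀ * U = 1 := by rw [← hstar]; exact hU1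
  -- sums of squares in eigen-coordinates
  have hL : ∑ i, (A *ᵥ ξ) i ^ 2 = ∑ i, lam i ^ 2 * c i ^ 2 := by
    rw [hAξ, aux_orth_sum_sq U hUorth]
    exact Finset.sum_congr rfl fun i _ => by ring
  have hX : ∑ i, ξ i ^ 2 = ∑ i, c i ^ 2 := by
    rw [hξ, aux_orth_sum_sq U hUorth]
  -- trace and Frobenius norm via eigenvalues
  have htrD : ∀ D : Matrix (Fin n) (Fin n) ℝ, (U * D * star U).trace = D.trace := by
    intro D
    rw [Matrix.trace_mul_cycle, hU1, Matrix.one_mul]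
  have hsum : ∑ j, lam j = 0 := by
    have : A.trace = (Matrix.diagonal lam).trace := by rw [hspec]; exact htrD _
    rw [htr, Matrix.trace_diagonal] at this
    linarith [this]
  have hF : ∑ i, ∑ j, A i j ^ 2 = ∑ j, lam j ^ 2 := by
    have h1 : (A * A).trace = ∑ j, lam j ^ 2 := by
      have : A * A = U * (Matrix.diagonal lam * Matrix.diagonal lam) * star U := by
        rw [hspec]
        rw [Matrix.mul_assoc (U * Matrix.diagonal lam) (star U) (U * Matrix.diagonal lam * star U)]
        rw [← Matrix.mul_assoc (star U) (U * Matrix.diagonal lam) (star U),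
            ← Matrix.mul_assoc (star U) U (Matrix.diagonal lam), hU1, Matrix.one_mul]
        noncomm_ring
      rw [this, htrD, Matrix.diagonal_mul_diagonal, Matrix.trace_diagonal]
      all_goals exact Finset.sum_congr rfl fun j _ => by simp [sq]
    rw [← h1]
    rw [Matrix.trace]
    simp only [Matrix.diag, Matrix.mul_apply]
    rw [Finset.sum_comm]
    refine Finset.sum_congr rfl fun i _ => Finset.sum_congr rfl fun j _ => ?_
    have : A j i = A i j := hA.apply i j
    rw [this, sq]
  -- conclude
  rw [hL, hX, hF]
  have hn' : (0 : ℝ) < n := by exact_mod_cast hn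
  have hstep : ∀ i, lam i ^ 2 * c i ^ 2 ≤
      (((n : ℝ) - 1) / n * ∑ j, lam j ^ 2) * c i ^ 2 := by
    intro i
    have h := aux_sq_le lam hsum i
    have hl : lam i ^ 2 ≤ ((n : ℝ) - 1) / n * ∑ j, lam j ^ 2 := by
      rw [div_mul_eq_mul_div, le_div_iff₀ hn']
      nlinarith [h]
    exact mul_le_mul_of_nonneg_right hl (sq_nonneg _)
  calc ∑ i, lam i ^ 2 * c i ^ 2
      ≤ ∑ i, (((n : ℝ) - 1) / n * ∑ j, lam j ^ 2) * c i ^ 2 :=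
        Finset.sum_le_sum fun i _ => hstep i
    _ = ((n : ℝ) - 1) / n * (∑ j, lam j ^ 2) * (∑ i, c i ^ 2) := by
        rw [← Finset.mul_sum]
end

section
/- Let L > 0 and c > 1/4 be real numbers, and let u : [0, L) → ℝ be a differentiable function such that u(0) = c, u(t) ≥ c for all t ∈ [0, L), |u′(t)| ≤ 2·u(t)·√(u(t) − 1/4) for all t ∈ [0, L), and u(t) → ∞ as t → L from the left. Then L ≥ 2·arctan(1/√(4c − 1)). -/
open Real Filter

lemma phi_hasDerivAt (x : ℝ) (hx : 1 / 4 < x) :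
    HasDerivAt (fun y => 2 * Real.arctan (2 * Real.sqrt (y - 1 / 4)))
      (1 / (2 * x * Real.sqrt (x - 1 / 4))) x := by
  have hs : 0 < x - 1 / 4 := by linarith
  have hsqrt : 0 < Real.sqrt (x - 1 / 4) := Real.sqrt_pos.mpr hs
  have h1 : HasDerivAt (fun y : ℝ => y - 1 / 4) 1 x := (hasDerivAt_id x).sub_const _
  have h2 : HasDerivAt (fun y : ℝ => Real.sqrt (y - 1 / 4))
      (1 / (2 * Real.sqrt (x - 1 / 4)) * 1) x :=
    (Real.hasDerivAt_sqrt (ne_of_gt hs)).comp x h1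
  have h3 : HasDerivAt (fun y : ℝ => 2 * Real.sqrt (y - 1 / 4))
      (2 * (1 / (2 * Real.sqrt (x - 1 / 4)) * 1)) x := h2.const_mul 2
  have h4 : HasDerivAt (fun y : ℝ => Real.arctan (2 * Real.sqrt (y - 1 / 4)))
      (1 / (1 + (2 * Real.sqrt (x - 1 / 4)) ^ 2) *
        (2 * (1 / (2 * Real.sqrt (x - 1 / 4)) * 1))) x :=
    by have := (Real.hasDerivAt_arctan (2 * Real.sqrt (x - 1 / 4))).comp x h3; exact this
  have h5 := h4.const_mul 2
  refine h5.congr_deriv ?_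
  have hsq : Real.sqrt (x - 1 / 4) ^ 2 = x - 1 / 4 := Real.sq_sqrt hs.le
  have : (2 * Real.sqrt (x - 1 / 4)) ^ 2 = 4 * (x - 1 / 4) := by rw [mul_pow, hsq]; ring
  rw [this]
  have hx0 : (0:ℝ) < x := by linarith
  field_simp
  ring

lemma sqrt_tendsto_atTop' : Tendsto Real.sqrt atTop atTop := by
  rw [tendsto_atTop_atTop]
  intro b
  refine ⟨max (b * b) 0, fun a ha => ?_⟩
  have h1 : b * b ≤ a := le_trans (le_max_left _ _) ha
  have h2 : |b| ≤ Real.sqrt a := by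
    rw [← Real.sqrt_mul_self_eq_abs]
    exact Real.sqrt_le_sqrt h1
  exact le_trans (le_abs_self b) h2

/-- ODE-comparison core of the diameter bound (Theorem 1.8): if `u` starts at
`c > 1/4`, stays `≥ c`, satisfies `|u′| ≤ 2u√(u − 1/4)` on `[0, L)`, and blows up
as `t → L⁻`, then `L ≥ 2 arctan(1/√(4c − 1))`. -/
theorem diameter_lower_bound_core
    (L c : ℝ) (hL : 0 < L) (hc : 1 / 4 < c)
    (u u' : ℝ → ℝ)
    (hderiv : ∀ t ∈ Set.Ico (0 : ℝ) L, HasDerivAt u (u' t) t)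
    (h0 : u 0 = c)
    (hge : ∀ t ∈ Set.Ico (0 : ℝ) L, c ≤ u t)
    (hbound : ∀ t ∈ Set.Ico (0 : ℝ) L,
      |u' t| ≤ 2 * u t * Real.sqrt (u t - 1 / 4))
    (hblow : Tendsto u (nhdsWithin L (Set.Iio L)) atTop) :
    L ≥ 2 * Real.arctan (1 / Real.sqrt (4 * c - 1)) := by
  set φ : ℝ → ℝ := fun t => 2 * Real.arctan (2 * Real.sqrt (u t - 1 / 4)) with hφ
  set φ' : ℝ → ℝ := fun t => 1 / (2 * u t * Real.sqrt (u t - 1 / 4)) * u' t with hφ'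
  have hut : ∀ t ∈ Set.Ico (0 : ℝ) L, 1 / 4 < u t := fun t ht => lt_of_lt_of_le hc (hge t ht)
  have hφderiv : ∀ t ∈ Set.Ico (0 : ℝ) L, HasDerivAt φ (φ' t) t := fun t ht =>
    (phi_hasDerivAt (u t) (hut t ht)).comp t (hderiv t ht)
  have hφbound : ∀ t ∈ Set.Ico (0 : ℝ) L, ‖φ' t‖ ≤ 1 := by
    intro t ht
    have h1 : 0 < u t - 1 / 4 := by have := hut t ht; linarith
    have h2 : 0 < Real.sqrt (u t - 1 / 4) := Real.sqrt_pos.mpr h1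
    have hu0 : 0 < u t := lt_trans (by norm_num) (hut t ht)
    have h3 : 0 < 2 * u t * Real.sqrt (u t - 1 / 4) := by positivity
    rw [Real.norm_eq_abs, hφ', abs_mul, abs_of_pos (by positivity : (0:ℝ) < 1 / (2 * u t * Real.sqrt (u t - 1 / 4)))]
    rw [div_mul_eq_mul_div, one_mul, div_le_one h3]
    exact hbound t ht
  -- Lipschitz bound via MVT on the convex set Ico 0 L
  have key : ∀ t ∈ Set.Ico (0 : ℝ) L, φ t ≤ φ 0 + t := by
    intro t ht
    have h0L : (0:ℝ) ∈ Set.Ico (0:ℝ) L := ⟨le_refl 0, hL⟩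
    have := (convex_Ico (0:ℝ) L).norm_image_sub_le_of_norm_hasDerivWithin_le
      (fun x hx => (hφderiv x hx).hasDerivWithinAt) hφbound h0L ht
    rw [Real.norm_eq_abs, Real.norm_eq_abs, one_mul, sub_zero, abs_of_nonneg ht.1] at this
    have := abs_le.mp this
    linarith [this.2]
  -- limit of φ at L⁻
  have hlim : Tendsto φ (nhdsWithin L (Set.Iio L)) (nhds π) := by
    have h1 : Tendsto (fun t => 2 * Real.sqrt (u t - 1 / 4)) (nhdsWithin L (Set.Iio L)) atTop := by
      apply Tendsto.const_mul_atTop (by norm_num : (0:ℝ) < 2)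
      apply sqrt_tendsto_atTop'.comp
      exact hblow.atTop_add tendsto_const_nhds
    have h2 : Tendsto (fun t => Real.arctan (2 * Real.sqrt (u t - 1 / 4)))
        (nhdsWithin L (Set.Iio L)) (nhds (π / 2)) :=
      (Real.tendsto_arctan_atTop.mono_right nhdsWithin_le_nhds).comp h1
    have := h2.const_mul 2
    simpa [hφ, mul_div_cancel₀] using this
  have hne : (nhdsWithin L (Set.Iio L)).NeBot := nhdsLT_neBot L
  have hπ : π ≤ φ 0 + L := by
    apply le_of_tendsto hlim
    filter_upwards [Ioo_mem_nhdsLT_of_mem (Set.mem_Ioc.mpr ⟨hL, le_refl L⟩)] with t ht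
    have := key t ⟨ht.1.le, ht.2⟩
    linarith [ht.2.le]
  -- identify φ 0 and conclude
  have hsqrt4 : Real.sqrt (4 * c - 1) = 2 * Real.sqrt (c - 1 / 4) := by
    rw [show 4 * c - 1 = 4 * (c - 1 / 4) by ring, Real.sqrt_mul (by norm_num) _,
      show Real.sqrt 4 = 2 by rw [show (4:ℝ) = 2 ^ 2 by norm_num, Real.sqrt_sq (by norm_num)]]
  have hpos : 0 < Real.sqrt (4 * c - 1) := Real.sqrt_pos.mpr (by linarith)
  have harc : Real.arctan (1 / Real.sqrt (4 * c - 1))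
      = π / 2 - Real.arctan (Real.sqrt (4 * c - 1)) := by
    rw [one_div, Real.arctan_inv_of_pos hpos]
  have hφ0 : φ 0 = 2 * Real.arctan (Real.sqrt (4 * c - 1)) := by
    simp [hφ, h0, hsqrt4]
  rw [ge_iff_le, harc]
  rw [hφ0] at hπ
  linarith
end
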